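/- Under Assumptions 1, 3 (strengthened contractivity), 4–5, 6 and 7, let x ∈ 𝒳, θ > 0, let (𝐮*,q*) be an optimal pair of P_{N_p}(x,θ) with q* = 1, and assume γ·Γ_max + θ·N_p·ℓ̄/ξ ≤ ω. Then for every w ∈ 𝒲 the successor state x⁺ := f(x,u*(0),w) belongs to Ω, and P_{N_p}(x⁺,θ⁺) is feasible for every θ⁺ > 0: there exists u⁺ ∈ 𝒰 such that the pair ((u⁺),1) is feasible for x⁺. -/

import Mathlib

open Pointwise

noncomputable section

abbrev Vec (n : ℕ) := EuclideanSpace ℝ (Fin n)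

/-- A class-K function: continuous (on `[0,∞)`), strictly increasing,
nonnegative, vanishing at `0`. -/
def ClassK (α : ℝ → ℝ) : Prop :=
  α 0 = 0 ∧ ContinuousOn α (Set.Ici 0) ∧ StrictMonoOn α (Set.Ici 0) ∧
    ∀ s, 0 ≤ s → 0 ≤ α s

/-- A class-K∞ function: class-K and unbounded. -/
def ClassKInf (α : ℝ → ℝ) : Prop :=
  ClassK α ∧ ∀ M : ℝ, ∃ s, 0 ≤ s ∧ M ≤ α s

/-- Trajectory of the perturbed system: `φ(j; x, 𝐮, 𝐰)`. -/
def traj {n m r : ℕ} (f : Vec n → Vec m → Vec r → Vec n) (x : Vec n)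
    (u : ℕ → Vec m) (w : ℕ → Vec r) : ℕ → Vec n
  | 0 => x
  | j + 1 => f (traj f x u w j) (u j) (w j)

/-- `min_{1 ≤ j ≤ q} g j`. -/
def minIcc (g : ℕ → ℝ) (q : ℕ) : ℝ := sInf (g '' Set.Icc 1 q)

/-- Pontryagin set difference `A ⊖ B`. -/
def pont {n : ℕ} (A B : Set (Vec n)) : Set (Vec n) := {x | ∀ b ∈ B, x + b ∈ A}

/-- Data of the robust contraction-based MPC problem. -/
structure MPCSetup (n m r : ℕ) where
  /-- system dynamics -/
  f : Vec n → Vec m → Vec r → Vec n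
  /-- state constraint set 𝒳 -/
  X : Set (Vec n)
  /-- input constraint set 𝒰 -/
  U : Set (Vec m)
  /-- disturbance bounds w̄ -/
  wbar : Fin r → ℝ
  /-- contractive function Γ -/
  Γ : Vec n → ℝ
  /-- moduli of continuity of f -/
  σx : Fin n → Fin n → ℝ → ℝ
  σu : Fin n → Fin m → ℝ → ℝ
  σw : Fin n → Fin r → ℝ → ℝ
  /-- modulus of continuity of Γ -/
  σΓ : ℝ → ℝ
  /-- upper bounding K∞ function for Γ -/
  αΓ : ℝ → ℝ
  /-- contraction factor -/
  γ : ℝ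
  /-- maximum prediction horizon -/
  Np : ℕ
  /-- the sets ℱ(j) -/
  Fset : ℕ → Set (Vec n)
  /-- the sets ℛ(j) -/
  Rset : ℕ → Set (Vec n)
  /-- stage cost -/
  ℓ : Vec n → Vec m → ℝ
  /-- upper bound on stage cost -/
  ℓbar : ℝ
  /-- lower bounding K function for the stage cost -/
  αℓ : ℝ → ℝ
  /-- moduli of continuity of the stage cost -/
  σℓx : ℝ → ℝ
  σℓu : ℝ → ℝ
  /-- weight of the contraction term in the cost -/
  ξ : ℝ

namespace MPCSetup

variable {n m r : ℕ}

/-- The disturbance set 𝒲. -/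
def W (S : MPCSetup n m r) : Set (Vec r) := {w | ∀ i, |w i| ≤ S.wbar i}

/-- Nominal (disturbance-free) trajectory `φ(j; x, 𝐮, 0)`. -/
def nom (S : MPCSetup n m r) (x : Vec n) (u : ℕ → Vec m) : ℕ → Vec n :=
  traj S.f x u fun _ => (0 : Vec r)

/-- Assumptions 1 (component-wise uniform continuity), 2 (constraint sets),
3 (strengthened contractivity), 4–5 (the sequences ℱ(j), ℛ(j)) and
7 (stage cost), together with ξ > 0. -/
structure Assumptions (S : MPCSetup n m r) : Prop where
  hX_compact : IsCompact S.X
  hU_compact : IsCompact S.U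
  hX_int : (interior S.X).Nonempty
  hU_int : (interior S.U).Nonempty
  -- Assumption 1
  hσx : ∀ i a, ClassK (S.σx i a)
  hσu : ∀ i b, ClassK (S.σu i b)
  hσw : ∀ i c, ClassK (S.σw i c)
  hf_cont : ∀ x ∈ S.X, ∀ u ∈ S.U, ∀ w ∈ S.W, ∀ x' ∈ S.X, ∀ u' ∈ S.U, ∀ w' ∈ S.W, ∀ i,
    |S.f x u w i - S.f x' u' w' i| ≤
      (∑ a, S.σx i a (|x a - x' a|)) + (∑ b, S.σu i b (|u b - u' b|)) +
        ∑ c, S.σw i c (|w c - w' c|)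
  -- Assumption 3 (strengthened contractivity)
  hΓ0 : S.Γ 0 = 0
  hΓpos : ∀ x, x ≠ 0 → 0 < S.Γ x
  hΓnonneg : ∀ x, 0 ≤ S.Γ x
  hσΓ : ClassK S.σΓ
  hΓuc : ∀ x ∈ S.X, ∀ x' ∈ S.X, |S.Γ x - S.Γ x'| ≤ S.σΓ ‖x - x'‖
  hαΓ : ClassKInf S.αΓ
  hΓub : ∀ x ∈ S.X, S.Γ x ≤ S.αΓ ‖x‖
  hγ : S.γ ∈ Set.Ioo (0 : ℝ) 1
  hNp : 1 ≤ S.Np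
  hcontract : ∀ x ∈ S.X, ∃ u : ℕ → Vec m, (∀ j < S.Np, u j ∈ S.U) ∧
    (∀ j ≤ S.Np, S.nom x u j ∈ pont S.X (S.Rset j)) ∧
    minIcc (fun j => S.Γ (S.nom x u j)) S.Np ≤ S.γ * S.Γ x
  -- Assumptions 4–5
  hF0 : S.Fset 0 = {z | ∀ i, |z i| ≤ ∑ a, S.σw i a (S.wbar a)}
  hR0 : S.Rset 0 = {0}
  hF : ∀ (x : Vec n) (u : ℕ → Vec m), (∀ j, u j ∈ S.U) →
    (∀ j, S.nom x u j ∈ S.X) →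
    ∀ x' : Vec n, x' - x ∈ S.Fset 0 → ∀ j, 1 ≤ j →
      S.nom x' u j ∈ {S.nom x u j} + S.Fset j
  hR : ∀ (x : Vec n) (u : ℕ → Vec m), (∀ j, u j ∈ S.U) →
    (∀ j, S.nom x u j ∈ S.X) →
    ∀ w : ℕ → Vec r, (∀ j, w j ∈ S.W) → ∀ j, 1 ≤ j →
      traj S.f x u w j ∈ {S.nom x u j} + S.Rset j
  hRNp : 0 ∈ pont S.X (S.Rset S.Np)
  hFR : ∀ j, S.Fset j + S.Rset j ⊆ S.Rset (j + 1)
  -- Assumption 7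
  hℓbar : 0 < S.ℓbar
  hℓ_bounds : ∀ x ∈ S.X, ∀ u ∈ S.U, 0 ≤ S.ℓ x u ∧ S.ℓ x u ≤ S.ℓbar
  hαℓ : ClassK S.αℓ
  hℓ_lb : ∀ x ∈ S.X, ∀ u ∈ S.U, S.αℓ ‖x‖ ≤ S.ℓ x u
  hσℓx : ClassK S.σℓx
  hσℓu : ClassK S.σℓu
  hℓ_uc : ∀ x ∈ S.X, ∀ u ∈ S.U, ∀ x' ∈ S.X, ∀ u' ∈ S.U,
    |S.ℓ x u - S.ℓ x' u'| ≤ S.σℓx ‖x - x'‖ + S.σℓu ‖u - u'‖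
  hξ : 0 < S.ξ

/-- A pair (𝐮, q) is feasible for `P_{N_p}(x, θ)`. -/
def Feasible (S : MPCSetup n m r) (x : Vec n) (u : ℕ → Vec m) (q : ℕ) : Prop :=
  q ∈ Set.Icc 1 S.Np ∧ (∀ j < q, u j ∈ S.U) ∧
    ∀ j ≤ q, S.nom x u j ∈ pont S.X (S.Rset j)

/-- Cost `V_{N_p}(x, θ, 𝐮, q)`. -/
def cost (S : MPCSetup n m r) (x : Vec n) (θ : ℝ) (u : ℕ → Vec m) (q : ℕ) : ℝ :=
  θ * ∑ j ∈ Finset.range q, S.ℓ (S.nom x u j) (u j) +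
    S.ξ * minIcc (fun j => S.Γ (S.nom x u j)) q

/-- Optimal value `V*_{N_p}(x, θ)`. -/
def Vstar (S : MPCSetup n m r) (x : Vec n) (θ : ℝ) : ℝ :=
  sInf {c | ∃ u q, S.Feasible x u q ∧ c = S.cost x θ u q}

/-- An optimal pair: a feasible pair attaining the optimal value, with the
smallest horizon among all feasible minimizers. -/
def OptimalPair (S : MPCSetup n m r) (x : Vec n) (θ : ℝ) (u : ℕ → Vec m) (q : ℕ) : Prop :=
  S.Feasible x u q ∧ S.cost x θ u q = S.Vstar x θ ∧
    ∀ u' q', S.Feasible x u' q' → S.cost x θ u' q' = S.Vstar x θ → q ≤ q'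

/-- The θ-update rule `f_θ`. -/
def fθ (S : MPCSetup n m r) (ε ν : ℝ) (x : Vec n) (θ' : ℝ) : ℝ :=
  if θ' < S.Γ x then θ' else max ε (ν * S.Γ x)

/-- Additional data: the RCIS Ω, the constant ω and `Γ_max := max_{x ∈ 𝒳} Γ(x)`. -/
structure Ext (S : MPCSetup n m r) where
  Ω : Set (Vec n)
  ω : ℝ
  Γmax : ℝ

/-- Assumption 6 (robust controlled invariant set) together with the
properties of ω and Γ_max. -/
structure ExtAssumptions (S : MPCSetup n m r) (E : S.Ext) : Prop where
  hΩX : E.Ω ⊆ S.X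
  hΩinv : ∀ x ∈ E.Ω, ∃ u ∈ S.U, ∀ w ∈ S.W, S.f x u w ∈ E.Ω
  hΩctrl : ∀ x ∈ E.Ω, ∃ u ∈ S.U, S.f x u 0 ∈ pont S.X (S.Rset 1)
  hΩR1 : 0 ∈ pont E.Ω (S.Rset 1)
  hω : 0 < E.ω
  hωsub : {x | S.Γ x ≤ E.ω} ⊆ pont E.Ω (S.Rset 1)
  hΓmax : IsGreatest (S.Γ '' S.X) E.Γmax
  hΓmax_pos : 0 < E.Γmax

end MPCSetup

/-! The nominal successor `x₁ = f(x, u*(0), 0)` of an optimal one-step pair costs at least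
`ξ Γ(x₁)`, while the contractive candidate of horizon `N_p` costs at most
`θ N_p ℓ̄ + ξ γ Γ(x)`; hence `Γ(x₁) ≤ γ Γ_max + θ N_p ℓ̄ / ξ ≤ ω` and `x₁ ∈ Ω ⊖ ℛ(1)`.
The disturbed successor differs from `x₁` by an element of `ℛ(1)`, so it lies in `Ω`,
and Assumption 6 supplies a one-step feasible input from there. -/

section Pontryagin

variable {n : ℕ} {A B : Set (Vec n)} {x y : Vec n}

theorem pont_subset_of_zero_mem (hB : (0 : Vec n) ∈ B) : pont A B ⊆ A :=
  fun x hx => by simpa using hx 0 hB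

theorem pont_singleton_zero (A : Set (Vec n)) : pont A {0} = A := by
  ext x
  simp [pont]

theorem singleton_add_subset_of_mem_pont (hx : x ∈ pont A B) : {x} + B ⊆ A := by
  rintro _ ⟨_, rfl, b, hb, rfl⟩
  exact hx b hb

theorem zero_mem_of_self_mem_singleton_add (hx : x ∈ {x} + B) : (0 : Vec n) ∈ B := by
  simpa only [Set.singleton_add, Set.image_add_left, Set.mem_preimage, neg_add_cancel] using hx

end Pontryagin

section Trajectory

variable {n m r : ℕ} {f : Vec n → Vec m → Vec r → Vec n}

theorem traj_succ_eq_traj_tail (x : Vec n) (u : ℕ → Vec m) (w : ℕ → Vec r) (k : ℕ) :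
    traj f x u w (k + 1) =
      traj f (f x (u 0) (w 0)) (fun j => u (j + 1)) (fun j => w (j + 1)) k := by
  induction k with
  | zero => rfl
  | succ k ih => rw [traj, ih, traj]

theorem exists_forall_traj_mem {U : Set (Vec m)} {Ω : Set (Vec n)} (w : Vec r)
    (hΩ : ∀ x ∈ Ω, ∃ u ∈ U, f x u w ∈ Ω) {y : Vec n} (hy : y ∈ Ω) :
    ∃ u : ℕ → Vec m, (∀ j, u j ∈ U) ∧ ∀ j, traj f y u (fun _ => w) j ∈ Ω := by
  choose g hgU hgΩ using hΩ
  let z : ℕ → Ω := fun j => Nat.rec ⟨y, hy⟩ (fun _ p => ⟨f p.1 (g p.1 p.2) w, hgΩ p.1 p.2⟩) j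
  have hz : ∀ j, traj f y (fun j => g (z j).1 (z j).2) (fun _ => w) j = (z j).1 := by
    intro j
    induction j with
    | zero => rfl
    | succ j ih => rw [traj, ih]
  exact ⟨fun j => g (z j).1 (z j).2, fun j => hgU _ _, fun j => hz j ▸ (z j).2⟩

end Trajectory

theorem minIcc_one (g : ℕ → ℝ) : minIcc g 1 = g 1 := by
  rw [minIcc, Set.Icc_self, Set.image_singleton, csInf_singleton]

theorem minIcc_nonneg {g : ℕ → ℝ} {q : ℕ} (hq : 1 ≤ q) (hg : ∀ j, 0 ≤ g j) :
    0 ≤ minIcc g q :=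
  le_csInf ((Set.nonempty_Icc.mpr hq).image g) (by rintro _ ⟨j, -, rfl⟩; exact hg j)

namespace MPCSetup

variable {n m r : ℕ} {S : MPCSetup n m r} {E : S.Ext}

theorem zero_mem_W_of_mem {w : Vec r} (hw : w ∈ S.W) : (0 : Vec r) ∈ S.W :=
  fun i => by simpa using (abs_nonneg _).trans (hw i)

theorem cost_one (x : Vec n) (θ : ℝ) (u : ℕ → Vec m) :
    S.cost x θ u 1 = θ * S.ℓ x (u 0) + S.ξ * S.Γ (S.f x (u 0) 0) := by
  rw [cost, minIcc_one, Finset.sum_range_one]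
  rfl

theorem Assumptions.zero_mem_Fset_zero (hA : S.Assumptions) (hW : (0 : Vec r) ∈ S.W) :
    (0 : Vec n) ∈ S.Fset 0 := by
  rw [hA.hF0]
  intro i
  simpa using Finset.sum_nonneg fun a _ => (hA.hσw i a).2.2.2 _ (by simpa using hW a)

theorem Assumptions.zero_mem_Rset_one (hA : S.Assumptions) (hW : (0 : Vec r) ∈ S.W) :
    (0 : Vec n) ∈ S.Rset 1 := by
  simpa using hA.hFR 0 (Set.add_mem_add (hA.zero_mem_Fset_zero hW) (hA.hR0 ▸ rfl))

theorem ExtAssumptions.zero_mem_Ω (hE : S.ExtAssumptions E) (hA : S.Assumptions)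
    (hW : (0 : Vec r) ∈ S.W) : (0 : Vec n) ∈ E.Ω :=
  pont_subset_of_zero_mem (hA.zero_mem_Rset_one hW) hE.hΩR1

theorem ExtAssumptions.exists_forall_nom_mem (hE : S.ExtAssumptions E)
    (hW : (0 : Vec r) ∈ S.W) {y : Vec n} (hy : y ∈ E.Ω) :
    ∃ u : ℕ → Vec m, (∀ j, u j ∈ S.U) ∧ ∀ j, S.nom y u j ∈ E.Ω :=
  exists_forall_traj_mem 0
    (fun x hx => (hE.hΩinv x hx).imp fun _ ⟨hu, hf⟩ => ⟨hu, hf 0 hW⟩) hy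

theorem Assumptions.zero_mem_Rset (hA : S.Assumptions) (hE : S.ExtAssumptions E)
    (hW : (0 : Vec r) ∈ S.W) : ∀ j, (0 : Vec n) ∈ S.Rset j
  | 0 => hA.hR0 ▸ rfl
  | j + 1 => by
    obtain ⟨u, hU, hΩ⟩ := hE.exists_forall_nom_mem hW (hE.zero_mem_Ω hA hW)
    exact zero_mem_of_self_mem_singleton_add
      (hA.hR 0 u hU (fun j => hE.hΩX (hΩ j)) (fun _ => 0) (fun _ => hW) (j + 1) j.succ_pos)

section Cost

variable {x : Vec n} {u : ℕ → Vec m} {q : ℕ} {θ : ℝ}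

theorem Feasible.nom_mem_X (hR : ∀ j, (0 : Vec n) ∈ S.Rset j) (h : S.Feasible x u q)
    {j : ℕ} (hj : j ≤ q) : S.nom x u j ∈ S.X :=
  pont_subset_of_zero_mem (hR j) (h.2.2 j hj)

theorem Feasible.cost_nonneg (hA : S.Assumptions) (hR : ∀ j, (0 : Vec n) ∈ S.Rset j)
    (hθ : 0 ≤ θ) (h : S.Feasible x u q) : 0 ≤ S.cost x θ u q := by
  have hℓ : 0 ≤ ∑ j ∈ Finset.range q, S.ℓ (S.nom x u j) (u j) :=
    Finset.sum_nonneg fun j hj => (hA.hℓ_bounds _ (h.nom_mem_X hR (Finset.mem_range.mp hj).le)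
      _ (h.2.1 j (Finset.mem_range.mp hj))).1
  have hΓ := minIcc_nonneg h.1.1 fun j => hA.hΓnonneg (S.nom x u j)
  have := hA.hξ.le
  unfold cost
  positivity

theorem Vstar_le (hA : S.Assumptions) (hR : ∀ j, (0 : Vec n) ∈ S.Rset j) (hx : x ∈ S.X)
    (hθ : 0 ≤ θ) : S.Vstar x θ ≤ θ * S.Np * S.ℓbar + S.ξ * (S.γ * S.Γ x) := by
  obtain ⟨uc, hucU, hucX, hcontr⟩ := hA.hcontract x hx
  have hfeas : S.Feasible x uc S.Np := ⟨⟨hA.hNp, le_rfl⟩, hucU, hucX⟩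
  have hsum : ∑ j ∈ Finset.range S.Np, S.ℓ (S.nom x uc j) (uc j) ≤ S.Np * S.ℓbar :=
    calc _ ≤ ∑ _j ∈ Finset.range S.Np, S.ℓbar :=
          Finset.sum_le_sum fun j hj => (hA.hℓ_bounds _
            (hfeas.nom_mem_X hR (Finset.mem_range.mp hj).le) _ (hucU j (Finset.mem_range.mp hj))).2
      _ = S.Np * S.ℓbar := by simp
  have := hA.hξ.le
  calc S.Vstar x θ ≤ S.cost x θ uc S.Np := by
        refine csInf_le ⟨0, ?_⟩ ⟨uc, S.Np, hfeas, rfl⟩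
        rintro _ ⟨u', q', hfeas', rfl⟩
        exact hfeas'.cost_nonneg hA hR hθ
    _ ≤ θ * (S.Np * S.ℓbar) + S.ξ * (S.γ * S.Γ x) := by unfold cost; gcongr
    _ = θ * S.Np * S.ℓbar + S.ξ * (S.γ * S.Γ x) := by ring

theorem OptimalPair.Γ_succ_le (hA : S.Assumptions) (hR : ∀ j, (0 : Vec n) ∈ S.Rset j)
    (hx : x ∈ S.X) (hθ : 0 ≤ θ) (h : S.OptimalPair x θ u 1) :
    S.Γ (S.f x (u 0) 0) ≤ S.γ * S.Γ x + θ * S.Np * S.ℓbar / S.ξ := by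
  have hℓ : 0 ≤ S.ℓ x (u 0) := (hA.hℓ_bounds x hx _ (h.1.2.1 0 one_pos)).1
  have hξΓ : S.ξ * S.Γ (S.f x (u 0) 0) ≤ θ * S.Np * S.ℓbar + S.ξ * (S.γ * S.Γ x) :=
    calc S.ξ * S.Γ (S.f x (u 0) 0) ≤ S.cost x θ u 1 := by
          rw [cost_one]; linarith [mul_nonneg hθ hℓ]
      _ = S.Vstar x θ := h.2.1
      _ ≤ _ := Vstar_le hA hR hx hθ
  rw [← sub_le_iff_le_add', le_div_iff₀ hA.hξ]
  linarith

end Cost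

theorem ExtAssumptions.f_mem_Ω (hE : S.ExtAssumptions E) (hA : S.Assumptions)
    (hW : (0 : Vec r) ∈ S.W) {x : Vec n} {v : Vec m} {w : Vec r} (hx : x ∈ S.X)
    (hv : v ∈ S.U) (hΓ : S.Γ (S.f x v 0) ≤ E.ω) (hw : w ∈ S.W) : S.f x v w ∈ E.Ω := by
  have hx₁ : S.f x v 0 ∈ pont E.Ω (S.Rset 1) := hE.hωsub hΓ
  -- Assumption 5 needs an input defined for all time with nominal trajectory in `𝒳`:
  -- continue `v` by an input keeping the nominal trajectory inside `Ω`.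
  obtain ⟨u₁, hu₁U, hu₁Ω⟩ :=
    hE.exists_forall_nom_mem hW (pont_subset_of_zero_mem (hA.zero_mem_Rset_one hW) hx₁)
  let u : ℕ → Vec m := fun j => Nat.casesOn j v u₁
  have hU : ∀ j, u j ∈ S.U
    | 0 => hv
    | j + 1 => hu₁U j
  have hX : ∀ j, S.nom x u j ∈ S.X
    | 0 => hx
    | j + 1 => by rw [nom, traj_succ_eq_traj_tail]; exact hE.hΩX (hu₁Ω j)
  exact singleton_add_subset_of_mem_pont hx₁
    (hA.hR x u hU hX (fun _ => w) (fun _ => hw) 1 le_rfl)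

theorem ExtAssumptions.exists_feasible_one (hE : S.ExtAssumptions E) (hA : S.Assumptions)
    {y : Vec n} (hy : y ∈ E.Ω) : ∃ v ∈ S.U, S.Feasible y (fun _ => v) 1 := by
  obtain ⟨v, hv, hfv⟩ := hE.hΩctrl y hy
  refine ⟨v, hv, ⟨le_rfl, hA.hNp⟩, fun _ _ => hv, fun j hj => ?_⟩
  interval_cases j
  · rw [hA.hR0, pont_singleton_zero]
    exact hE.hΩX hy
  · exact hfv

end MPCSetup

/-- Lemma 4, recursive feasibility for q* = 1: the perturbed
successor state lands in the RCIS Ω and a one-step feasible pair exists. -/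
theorem recursive_feasibility_q_eq_one {n m r : ℕ} (S : MPCSetup n m r)
    (hA : S.Assumptions) (E : S.Ext) (hE : S.ExtAssumptions E) :
    ∀ x ∈ S.X, ∀ θ : ℝ, 0 < θ → ∀ (u : ℕ → Vec m) (q : ℕ),
      S.OptimalPair x θ u q → q = 1 →
      S.γ * E.Γmax + θ * S.Np * S.ℓbar / S.ξ ≤ E.ω →
      ∀ w ∈ S.W,
        S.f x (u 0) w ∈ E.Ω ∧
          ∃ uplus ∈ S.U, S.Feasible (S.f x (u 0) w) (fun _ => uplus) 1 := by
  rintro x hx θ hθ u q hopt rfl hbound w hw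
  have hW := MPCSetup.zero_mem_W_of_mem hw
  have hR := hA.zero_mem_Rset hE hW
  have hγ := hA.hγ.1.le
  have hΓ : S.Γ (S.f x (u 0) 0) ≤ E.ω :=
    calc _ ≤ S.γ * S.Γ x + θ * S.Np * S.ℓbar / S.ξ := hopt.Γ_succ_le hA hR hx hθ.le
      _ ≤ S.γ * E.Γmax + θ * S.Np * S.ℓbar / S.ξ := by
          gcongr
          exact hE.hΓmax.2 ⟨x, hx, rfl⟩
      _ ≤ E.ω := hbound
  have hmem := hE.f_mem_Ω hA hW hx (hopt.1.2.1 0 one_pos) hΓ hw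
  exact ⟨hmem, hE.exists_feasible_one hA hmem⟩
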